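/- arXiv:2008.13737 — 6 statements merged into one kernel-verified Lean document; each statement's English description precedes it below -/
import Mathlib

section
/- Let v be a nonzero vector in ℝ^d and F a finite family of compact convex sets in ℝ^d. If for every subfamily of F with at most 2d sets, the intersection has v-width at least 1, then the intersection of all of F has v-width at least 1. -/
open scoped RealInnerProductSpace

open Finset Module

/-- Helly-type theorem for `v`-width: if every subfamily of at most `2d` sets has
`v`-width at least 1, then the whole intersection has `v`-width at least 1. -/
theorem stmt0 (d : ℕ) (v : EuclideanSpace ℝ (Fin d)) (hv : v ≠ 0)
    (F : Finset (Set (EuclideanSpace ℝ (Fin d)))) (hne : F.Nonempty)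
    (hcomp : ∀ K ∈ F, IsCompact K) (hconv : ∀ K ∈ F, Convex ℝ K)
    (h : ∀ G ⊆ F, G.card ≤ 2 * d →
      ∃ x ∈ (⋂ K ∈ G, K), ∃ y ∈ (⋂ K ∈ G, K), (1 : ℝ) ≤ ⟪x - y, v⟫) :
    ∃ x ∈ (⋂ K ∈ F, K), ∃ y ∈ (⋂ K ∈ F, K), (1 : ℝ) ≤ ⟪x - y, v⟫ := by
  classical
  have hd : 1 ≤ d := by
    rcases Nat.eq_zero_or_pos d with rfl | hpos
    · exact absurd (Subsingleton.elim v 0) hv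
    · exact hpos
  -- the intersection of the whole family is nonempty, by Helly in dimension d
  have hFne : (⋂ K ∈ F, K).Nonempty := by
    apply Convex.helly_theorem' (𝕜 := ℝ) hconv
    intro I hI hIcard
    have : I.card ≤ 2 * d := by
      have : finrank ℝ (EuclideanSpace ℝ (Fin d)) = d := by simp
      omega
    obtain ⟨x, hx, -⟩ := h I hI this
    exact ⟨x, hx⟩
  obtain ⟨z, hz⟩ := hFne
  -- work in EuclideanSpace ℝ (Fin d) × EuclideanSpace ℝ (Fin d)
  set H : Set (EuclideanSpace ℝ (Fin d) × EuclideanSpace ℝ (Fin d)) := {p | (1 : ℝ) ≤ ⟪p.1 - p.2, v⟫} with hH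
  have hHconv : Convex ℝ H := by
    have : IsLinearMap ℝ (fun p : EuclideanSpace ℝ (Fin d) × EuclideanSpace ℝ (Fin d) => (⟪p.1, v⟫ - ⟪p.2, v⟫ : ℝ)) := by
      constructor
      · intro p q; simp [inner_add_left]; ring
      · intro c p; simp [inner_smul_left]; ring
    have h2 := convex_halfSpace_ge this (1 : ℝ)
    convert h2 using 2 with p
    case e'_6 => rfl
    funext p; simp [hH, Set.mem_setOf_eq, inner_sub_left]
  -- index family
  set G : Option (Set (EuclideanSpace ℝ (Fin d))) → Set (EuclideanSpace ℝ (Fin d) × EuclideanSpace ℝ (Fin d)) := fun o =>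
    match o with
    | none => H
    | some K => K ×ˢ K
    with hG
  set s : Finset (Option (Set (EuclideanSpace ℝ (Fin d)))) := insert none (F.image some) with hs
  have hrank : finrank ℝ (EuclideanSpace ℝ (Fin d) × EuclideanSpace ℝ (Fin d)) = 2 * d := by
    simp; ring
  have key : (⋂ i ∈ s, G i).Nonempty := by
    apply Convex.helly_theorem' (𝕜 := ℝ)
    · rintro (_ | K) hi
      · exact hHconv
      · have hKF : K ∈ F := by
          simp only [hs, Finset.mem_insert, Finset.mem_image] at hi
          rcases hi with h1 | ⟨a, ha, he⟩
          · exact absurd h1 (by simp)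
          · cases he; exact ha
        exact (hconv K hKF).prod (hconv K hKF)
    · intro I hIs hIcard
      rw [hrank] at hIcard
      set I' : Finset (Set (EuclideanSpace ℝ (Fin d))) := F.filter (fun K => some K ∈ I) with hI'
      have hI'F : I' ⊆ F := Finset.filter_subset _ _
      by_cases hnone : none ∈ I
      · -- use h on I'
        have hcard' : I'.card ≤ 2 * d := by
          have hinj : ∀ K ∈ I', some K ∈ I.erase none := by
            intro K hK
            simp only [hI', Finset.mem_filter] at hK
            exact Finset.mem_erase.mpr ⟨by simp, hK.2⟩
          have := Finset.card_le_card_of_injOn some hinj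
            (fun a _ b _ hab => Option.some_injective _ hab)
          have := Finset.card_erase_of_mem hnone
          omega
        obtain ⟨x, hx, y, hy, hxy⟩ := h I' hI'F hcard'
        refine ⟨(x, y), ?_⟩
        apply Set.mem_biInter
        rintro (_ | K) hi
        · exact hxy
        · have hKF : K ∈ F := by
            have := hIs hi
            simp only [hs, Finset.mem_insert, Finset.mem_image] at this
            rcases this with h1 | ⟨a, ha, he⟩
            · exact absurd h1 (by simp)
            · cases he; exact ha
          have hKI' : K ∈ I' := Finset.mem_filter.mpr ⟨hKF, hi⟩
          exact ⟨Set.mem_iInter₂.mp hx K hKI', Set.mem_iInter₂.mp hy K hKI'⟩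
      · -- use z
        refine ⟨(z, z), ?_⟩
        apply Set.mem_biInter
        rintro (_ | K) hi
        · exact absurd hi hnone
        · have hKF : K ∈ F := by
            have := hIs hi
            simp only [hs, Finset.mem_insert, Finset.mem_image] at this
            rcases this with h1 | ⟨a, ha, he⟩
            · exact absurd h1 (by simp)
            · cases he; exact ha
          exact ⟨Set.mem_iInter₂.mp hz K hKF, Set.mem_iInter₂.mp hz K hKF⟩
  obtain ⟨⟨x, y⟩, hxy⟩ := key
  have hmem : ∀ i ∈ s, (x, y) ∈ G i := fun i hi => Set.mem_iInter₂.mp hxy i hi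
  have hH' : (1 : ℝ) ≤ ⟪x - y, v⟫ := hmem none (Finset.mem_insert_self _ _)
  refine ⟨x, ?_, y, ?_, hH'⟩ <;>
  · apply Set.mem_biInter
    intro K hK
    have := hmem (some K) (by
      simp only [hs, Finset.mem_insert, Finset.mem_image]
      exact Or.inr ⟨K, hK, rfl⟩)
    first
    | exact this.1
    | exact this.2
end

section
/- Assuming Doignon's theorem (if every subfamily of size at most 2^n of a finite family of convex sets in ℝ^n has an integer point in its intersection, then the whole family does), the following holds: let k be a positive integer and F a finite family of convex sets in ℝ^d such that the intersection of every subfamily of at most 4^d sets of F contains k colinear integer points; then the intersection of all of F contains k colinear integer points. -/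
/-- There is a real vector whose coordinates are linearly independent over `ℤ`:
powers of a Liouville (hence transcendental) number. -/
lemma exists_good_c (d : ℕ) :
    ∃ c : Fin d → ℝ, ∀ y : Fin d → ℤ, y ≠ 0 → (∑ i, (y i : ℝ) * c i) ≠ 0 := by
  set t : ℝ := liouvilleNumber 2
  have ht : Transcendental ℤ t := transcendental_liouvilleNumber le_rfl
  refine ⟨fun i => t ^ (i.val + 1), fun y hy hsum => ?_⟩
  obtain ⟨i0, hi0⟩ : ∃ i, y i ≠ 0 := by
    by_contra hcon
    push_neg at hcon
    exact hy (funext fun i => hcon i)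
  apply ht
  refine ⟨∑ i : Fin d, Polynomial.C (y i) * Polynomial.X ^ (i.val + 1), ?_, ?_⟩
  · intro h0
    have hcoeff : (∑ i : Fin d, Polynomial.C (y i) * Polynomial.X ^ (i.val + 1)).coeff
        (i0.val + 1) = y i0 := by
      rw [Polynomial.finset_sum_coeff, Finset.sum_eq_single i0]
      · simp
      · intro i _ hne
        have hne' : (i.val + 1 : ℕ) ≠ i0.val + 1 := fun hh => hne (Fin.ext (by omega))
        simp only [Polynomial.coeff_C_mul, Polynomial.coeff_X_pow]
        rw [if_neg (by omega)]
        ring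
      · intro hcon
        exact absurd (Finset.mem_univ i0) hcon
    rw [h0] at hcoeff
    simp at hcoeff
    exact hi0 hcoeff.symm
  · rw [map_sum]
    simp only [map_mul, map_pow, Polynomial.aeval_X, map_intCast, Polynomial.aeval_C,
      algebraMap_int_eq, eq_intCast]
    exact hsum

/-- Assuming Doignon's theorem, the Helly-type theorem for `k` colinear integer
points holds with Helly number `4^d`. -/
theorem stmt4
    (doignon : ∀ n : ℕ, ∀ F : Finset (Set (EuclideanSpace ℝ (Fin n))),
      F.Nonempty → (∀ K ∈ F, Convex ℝ K) →
      (∀ G ⊆ F, G.card ≤ 2 ^ n →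
        ∃ z : Fin n → ℤ, (WithLp.toLp 2 (fun i => (z i : ℝ)) : EuclideanSpace ℝ (Fin n)) ∈ ⋂ K ∈ G, K) →
      ∃ z : Fin n → ℤ, (WithLp.toLp 2 (fun i => (z i : ℝ)) : EuclideanSpace ℝ (Fin n)) ∈ ⋂ K ∈ F, K)
    (d k : ℕ) (hk : 0 < k)
    (F : Finset (Set (EuclideanSpace ℝ (Fin d)))) (hne : F.Nonempty)
    (hconv : ∀ K ∈ F, Convex ℝ K)
    (h : ∀ G ⊆ F, G.card ≤ 4 ^ d →
      ∃ x y : Fin d → ℤ, y ≠ 0 ∧ ∀ j < k,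
        (WithLp.toLp 2 (fun i => (x i : ℝ) + (j : ℝ) * (y i : ℝ)) : EuclideanSpace ℝ (Fin d)) ∈ ⋂ K ∈ G, K) :
    ∃ x y : Fin d → ℤ, y ≠ 0 ∧ ∀ j < k,
      (WithLp.toLp 2 (fun i => (x i : ℝ) + (j : ℝ) * (y i : ℝ)) : EuclideanSpace ℝ (Fin d)) ∈ ⋂ K ∈ F, K := by
  classical
  obtain ⟨c, hc⟩ := exists_good_c d
  -- the lifted sets in dimension d + d
  set lift : Set (EuclideanSpace ℝ (Fin d)) → Set (EuclideanSpace ℝ (Fin (d + d))) :=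
    fun K => {p | (∀ j < k, (WithLp.toLp 2 (fun i => p (Fin.castAdd d i) + (j : ℝ) * p (Fin.natAdd d i)) :
        EuclideanSpace ℝ (Fin d)) ∈ K) ∧ 0 < ∑ i, p (Fin.natAdd d i) * c i} with hlift
  have hpow : (2 : ℕ) ^ (d + d) = 4 ^ d := by
    rw [pow_add, ← mul_pow]
    norm_num
  obtain ⟨z, hz⟩ := doignon (d + d) (F.image lift) (hne.image lift)
    (by
      intro K' hK'
      obtain ⟨K, hKF, rfl⟩ := Finset.mem_image.mp hK'
      intro p hp q hq a b ha hb hab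
      obtain ⟨hp1, hp2⟩ := hp
      obtain ⟨hq1, hq2⟩ := hq
      constructor
      · intro j hj
        have hm := hconv K hKF (hp1 j hj) (hq1 j hj) ha hb hab
        convert hm using 1
        ext i
        simp only [PiLp.add_apply, PiLp.smul_apply, smul_eq_mul, PiLp.toLp_apply]
        ring
      · have hsum : ∑ i, ((a • p + b • q) (Fin.natAdd d i)) * c i
            = a * (∑ i, p (Fin.natAdd d i) * c i) + b * (∑ i, q (Fin.natAdd d i) * c i) := by
          rw [Finset.mul_sum, Finset.mul_sum, ← Finset.sum_add_distrib]
          refine Finset.sum_congr rfl fun i _ => ?_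
          simp only [PiLp.add_apply, PiLp.smul_apply, smul_eq_mul]
          ring
        rw [hsum]
        rcases eq_or_lt_of_le ha with ha0 | hapos
        · have hb1 : b = 1 := by linarith
          rw [← ha0, hb1]
          simpa using hq2
        · have h1 : 0 < a * (∑ i, p (Fin.natAdd d i) * c i) := mul_pos hapos hp2
          have h2 : 0 ≤ b * (∑ i, q (Fin.natAdd d i) * c i) := mul_nonneg hb hq2.le
          linarith)
    (by
      intro G' hG' hcardG'
      have hpre : ∀ S ∈ G', ∃ K, K ∈ F ∧ lift K = S := by
        intro S hS
        obtain ⟨K, hK, rfl⟩ := Finset.mem_image.mp (hG' hS)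
        exact ⟨K, hK, rfl⟩
      choose! g hg1 hg2 using hpre
      have hGF : G'.image g ⊆ F := by
        intro K hK
        obtain ⟨S, hS, rfl⟩ := Finset.mem_image.mp hK
        exact hg1 S hS
      have hGcard : (G'.image g).card ≤ 4 ^ d :=
        le_trans Finset.card_image_le (hpow ▸ hcardG')
      obtain ⟨x, y, hy, hxy⟩ := h (G'.image g) hGF hGcard
      have hcy : (∑ i, (y i : ℝ) * c i) ≠ 0 := hc y hy
      rcases hcy.lt_or_gt with hneg | hpos
      · -- use the reversed segment: x + (k-1)y, direction -y
        refine ⟨Fin.append (fun i => x i + ((k : ℤ) - 1) * y i) (fun i => -y i), ?_⟩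
        rw [Set.mem_iInter₂]
        intro S hS
        rw [← hg2 S hS]
        constructor
        · intro j hj
          have hm := hxy (k - 1 - j) (by omega)
          rw [Set.mem_iInter₂] at hm
          have hmem := hm (g S) (Finset.mem_image_of_mem g hS)
          convert hmem using 1
          ext i
          simp only [Fin.append_left, Fin.append_right, PiLp.toLp_apply]
          have hcast : ((k - 1 - j : ℕ) : ℝ) = (k : ℝ) - 1 - (j : ℝ) := by
            have h1 : j ≤ k - 1 := by omega
            have h2 : 1 ≤ k := hk
            push_cast [Nat.cast_sub h1, Nat.cast_sub h2]
            ring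
          push_cast
          rw [hcast]
          ring
        · have : ∑ i, ((-(y i) : ℤ) : ℝ) * c i = -(∑ i, (y i : ℝ) * c i) := by
            rw [← Finset.sum_neg_distrib]
            refine Finset.sum_congr rfl fun i _ => ?_
            push_cast
            ring
          simp only [Fin.append_right, PiLp.toLp_apply]
          push_cast
          rw [show ∑ i, -((y i : ℝ)) * c i = -(∑ i, (y i : ℝ) * c i) by
            rw [← Finset.sum_neg_distrib]; exact Finset.sum_congr rfl fun i _ => by ring]
          linarith
      · refine ⟨Fin.append x y, ?_⟩
        rw [Set.mem_iInter₂]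
        intro S hS
        rw [← hg2 S hS]
        constructor
        · intro j hj
          have hm := hxy j hj
          rw [Set.mem_iInter₂] at hm
          have hmem := hm (g S) (Finset.mem_image_of_mem g hS)
          convert hmem using 1
          ext i
          simp only [Fin.append_left, Fin.append_right, PiLp.toLp_apply]
        · simp only [Fin.append_right, PiLp.toLp_apply]
          exact hpos)
  rw [Set.mem_iInter₂] at hz
  refine ⟨fun i => z (Fin.castAdd d i), fun i => z (Fin.natAdd d i), ?_, ?_⟩
  · obtain ⟨K0, hK0⟩ := hne
    have h0 := hz (lift K0) (Finset.mem_image_of_mem lift hK0)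
    intro hy0
    have hpos := h0.2
    have : ∑ i, ((z (Fin.natAdd d i) : ℤ) : ℝ) * c i = 0 := by
      refine Finset.sum_eq_zero fun i _ => ?_
      have : z (Fin.natAdd d i) = 0 := congrFun hy0 i
      rw [this]
      simp
    rw [this] at hpos
    exact lt_irrefl _ hpos
  · intro j hj
    rw [Set.mem_iInter₂]
    intro K hK
    exact (hz (lift K) (Finset.mem_image_of_mem lift hK)).1 j hj
end

section
/- For each d ≥ 1, let R ⊆ {0,1,2,3}^d be the set of integer points with exactly one coordinate in {0,3}, and Q = {1,2}^d. Then |R| = d·2^d, and for the family F = {conv(Q ∪ R \ {x}) : x ∈ R} of d·2^d convex sets, the intersection of any d·2^d − 1 of them contains 3 colinear integer points, while the set of integer points in the intersection of all of F is exactly Q. -/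
lemma hull_int_ge (d : ℕ) (s : Set (Fin d → ℤ)) (u : Fin d → ℤ) (c : ℤ)
    (h : ∀ z ∈ s, c ≤ ∑ k, u k * z k)
    {p : EuclideanSpace ℝ (Fin d)}
    (hp : p ∈ convexHull ℝ
      ((fun z => (WithLp.toLp 2 (fun i => (z i : ℝ)) : EuclideanSpace ℝ (Fin d))) '' s)) :
    (c : ℝ) ≤ ∑ k, (u k : ℝ) * p k := by
  have hlin : IsLinearMap ℝ (fun p : EuclideanSpace ℝ (Fin d) => ∑ k, (u k : ℝ) * p k) := by
    constructor
    · intro a b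
      simp [Finset.sum_add_distrib, mul_add]
    · intro c a
      simp [Finset.mul_sum, mul_left_comm]
  have := convexHull_min (s := ((fun z => (WithLp.toLp 2 (fun i => (z i : ℝ)) : EuclideanSpace ℝ (Fin d))) '' s))
    (t := {p : EuclideanSpace ℝ (Fin d) | (c:ℝ) ≤ ∑ k, (u k : ℝ) * p k}) ?_
    (convex_halfSpace_ge hlin (c:ℝ))
  · exact this hp
  · rintro _ ⟨z, hz, rfl⟩
    have := h z hz
    have : (c:ℝ) ≤ ((∑ k, u k * z k : ℤ) : ℝ) := by exact_mod_cast this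
    simpa using this

lemma sum_two_ind {d : ℕ} (i j : Fin d) (hij : i ≠ j) (a b : ℤ) (z : Fin d → ℤ) :
    ∑ k, (if k = i then a else if k = j then b else 0) * z k = a * z i + b * z j := by
  have hfun : ∀ k, (if k = i then a else if k = j then b else 0) * z k
      = (if k = i then a * z i else 0) + (if k = j then b * z j else 0) := by
    intro k
    by_cases h1 : k = i <;> by_cases h2 : k = j
    · exact absurd (h1 ▸ h2) hij
    · subst h1; simp [hij, h2]
    · subst h2; simp [Ne.symm hij]
    · simp [h1, h2]
  simp [hfun, Finset.sum_add_distrib]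

lemma sum_one_ind {d : ℕ} (i : Fin d) (a : ℤ) (z : Fin d → ℤ) :
    ∑ k, (if k = i then a else 0) * z k = a * z i := by
  have hfun : ∀ k, (if k = i then a else 0) * z k = (if k = i then a * z i else 0) := by
    intro k; by_cases h1 : k = i <;> simp [h1]
  simp [hfun]

lemma R_struct {d : ℕ} {x : Fin d → ℤ}
    (hx : (∀ i, x i ∈ ({0, 1, 2, 3} : Set ℤ)) ∧ ∃! i, x i = 0 ∨ x i = 3) :
    ∃ i : Fin d, (x i = 0 ∨ x i = 3) ∧ ∀ j, j ≠ i → x j = 1 ∨ x j = 2 := by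
  obtain ⟨i, hi, huniq⟩ := hx.2
  refine ⟨i, hi, fun j hj => ?_⟩
  have hj' : ¬(x j = 0 ∨ x j = 3) := fun h => hj (huniq j h)
  have := hx.1 j
  simp only [Set.mem_insert_iff, Set.mem_singleton_iff] at this
  push_neg at hj'
  tauto

lemma excl_ineq {d : ℕ} (hd : 1 ≤ d) {x : Fin d → ℤ} (i : Fin d)
    (hxi : x i = 0 ∨ x i = 3) (hxo : ∀ j, j ≠ i → x j = 1 ∨ x j = 2)
    (u : Fin d → ℤ)
    (hu : ∀ k, u k = if k = i then (if x i = 0 then 3*(d:ℤ) else -(3*(d:ℤ))) else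
      (if x k = 1 then 1 else -1))
    (z : Fin d → ℤ) (hz03 : ∀ k, 0 ≤ z k ∧ z k ≤ 3)
    (hzsp : z i = x i → ∀ j, j ≠ i → z j = 1 ∨ z j = 2)
    (hne : z ≠ x) :
    (∑ k, u k * x k) + 1 ≤ ∑ k, u k * z k := by
  have key : 1 ≤ ∑ k, u k * (z k - x k) := by
    have hsplit : ∑ k, u k * (z k - x k)
        = (∑ k ∈ Finset.univ.erase i, u k * (z k - x k)) + u i * (z i - x i) :=
      (Finset.sum_erase_add _ _ (Finset.mem_univ i)).symm
    by_cases hzi : z i = x i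
    · have hterm : ∀ k ∈ Finset.univ.erase i, 0 ≤ u k * (z k - x k) := by
        intro k hk
        have hki : k ≠ i := (Finset.mem_erase.1 hk).1
        have hzk := hzsp hzi k hki
        have hxk := hxo k hki
        rw [hu k, if_neg hki]
        rcases hxk with h | h <;> rcases hzk with h' | h' <;> simp [h, h'] <;> omega
      obtain ⟨k₀, hk₀ne⟩ : ∃ k₀, z k₀ ≠ x k₀ := by
        by_contra hc; push_neg at hc; exact hne (funext hc)
      have hk₀i : k₀ ≠ i := fun h => hk₀ne (h ▸ hzi)
      have hone : 1 ≤ u k₀ * (z k₀ - x k₀) := by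
        have hzk := hzsp hzi k₀ hk₀i
        have hxk := hxo k₀ hk₀i
        rw [hu k₀, if_neg hk₀i]
        rcases hxk with h | h <;> rcases hzk with h' | h' <;> simp [h, h'] <;> omega
      have hge : 1 ≤ ∑ k ∈ Finset.univ.erase i, u k * (z k - x k) :=
        le_trans hone (Finset.single_le_sum hterm (Finset.mem_erase.2 ⟨hk₀i, Finset.mem_univ _⟩))
      have hzero : u i * (z i - x i) = 0 := by rw [hzi]; ring
      omega
    · have hd' : (1:ℤ) ≤ (d:ℤ) := by exact_mod_cast hd
      have hbig : 3 * (d:ℤ) ≤ u i * (z i - x i) := by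
        have h03 := hz03 i
        rw [hu i, if_pos rfl]
        rcases hxi with h | h
        · rw [if_pos h, h]
          have h1 : 1 ≤ z i := by omega
          nlinarith
        · rw [if_neg (by omega), h]
          have h1 : z i ≤ 2 := by omega
          nlinarith
      have hsmall : ∀ k ∈ Finset.univ.erase i, (-1:ℤ) ≤ u k * (z k - x k) := by
        intro k hk
        have hki : k ≠ i := (Finset.mem_erase.1 hk).1
        have hxk := hxo k hki
        have h03 := hz03 k
        rw [hu k, if_neg hki]
        rcases hxk with h | h <;> simp [h] <;> omega
      have hcard : (Finset.univ.erase i).card = d - 1 := by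
        simp [Finset.card_erase_of_mem]
      have hsum : -((d:ℤ) - 1) ≤ ∑ k ∈ Finset.univ.erase i, u k * (z k - x k) := by
        have h1 := Finset.sum_le_sum hsmall
        rw [Finset.sum_const, hcard] at h1
        have : ((d - 1 : ℕ) : ℤ) = (d:ℤ) - 1 := by
          push_cast [Nat.cast_sub hd]; ring
        simp only [nsmul_eq_mul, this] at h1
        linarith
      linarith
  have heq : ∑ k, u k * (z k - x k) = (∑ k, u k * z k) - ∑ k, u k * x k := by
    simp [mul_sub, Finset.sum_sub_distrib]
  omega

lemma gen_bounds {d : ℕ} {z : Fin d → ℤ}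
    (hz : (∀ i, z i = 1 ∨ z i = 2) ∨
      ((∀ i, z i ∈ ({0, 1, 2, 3} : Set ℤ)) ∧ ∃! i, z i = 0 ∨ z i = 3)) :
    (∀ k, 0 ≤ z k ∧ z k ≤ 3) ∧
      ∀ i j, i ≠ j → 1 ≤ z i + z j ∧ z i + z j ≤ 5 ∧ -2 ≤ z i - z j := by
  rcases hz with hq | ⟨h03, i₀, hi₀, huniq⟩
  · constructor
    · intro k; rcases hq k with h | h <;> omega
    · intro i j _; rcases hq i with h | h <;> rcases hq j with h' | h' <;> omega
  · have hcoord : ∀ k, 0 ≤ z k ∧ z k ≤ 3 := by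
      intro k; have := h03 k
      simp only [Set.mem_insert_iff, Set.mem_singleton_iff] at this
      omega
    refine ⟨hcoord, fun i j hij => ?_⟩
    have hnot : ¬((z i = 0 ∨ z i = 3) ∧ (z j = 0 ∨ z j = 3)) := by
      rintro ⟨h1, h2⟩
      exact hij ((huniq i h1).trans (huniq j h2).symm)
    have hi := h03 i; have hj := h03 j
    simp only [Set.mem_insert_iff, Set.mem_singleton_iff] at hi hj
    omega

lemma classify {d : ℕ} {z : Fin d → ℤ}
    (hc : ∀ k, 0 ≤ z k ∧ z k ≤ 3)
    (hp : ∀ i j, i ≠ j → 1 ≤ z i + z j ∧ z i + z j ≤ 5 ∧ -2 ≤ z i - z j) :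
    (∀ i, z i = 1 ∨ z i = 2) ∨
      ((∀ i, z i ∈ ({0, 1, 2, 3} : Set ℤ)) ∧ ∃! i, z i = 0 ∨ z i = 3) := by
  by_cases hex : ∃ i, z i = 0 ∨ z i = 3
  · obtain ⟨i, hi⟩ := hex
    right
    refine ⟨fun k => by have := hc k; simp only [Set.mem_insert_iff, Set.mem_singleton_iff]; omega,
      i, hi, fun j hj => ?_⟩
    by_contra hji
    have h1 := hp i j (Ne.symm hji)
    have h2 := hp j i hji
    rcases hi with h | h <;> rcases hj with h' | h' <;> omega
  · push_neg at hex
    left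
    intro i
    have := hex i
    have := hc i
    omega

lemma count_R (d : ℕ) (hd : 1 ≤ d) :
    ({z : Fin d → ℤ | (∀ i, z i ∈ ({0, 1, 2, 3} : Set ℤ)) ∧ ∃! i, z i = 0 ∨ z i = 3}).ncard
      = d * 2 ^ d := by
  classical
  set T := Σ i : Fin d, Bool × ({j : Fin d // j ≠ i} → Bool) with hT
  set f : T → (Fin d → ℤ) := fun t => fun j =>
    if h : j = t.1 then (if t.2.1 then 0 else 3) else (if t.2.2 ⟨j, h⟩ then 1 else 2) with hf
  have hval1 : ∀ t : T, f t t.1 = 0 ∨ f t t.1 = 3 := by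
    intro t; simp only [hf, dif_pos rfl]
    rcases t.2.1 with _ | _ <;> simp
  have hval2 : ∀ (t : T) (j : Fin d) (h : j ≠ t.1), f t j = 1 ∨ f t j = 2 := by
    intro t j h; simp only [hf, dif_neg h]
    rcases t.2.2 ⟨j, h⟩ with _ | _ <;> simp
  have hinj : Function.Injective f := by
    rintro ⟨i, b, g⟩ ⟨i', b', g'⟩ heq
    have hii : i = i' := by
      by_contra hne
      have h1 := hval1 ⟨i, b, g⟩
      have h2 := hval2 ⟨i', b', g'⟩ i hne
      rw [show f ⟨i, b, g⟩ i = f ⟨i', b', g'⟩ i from congrFun heq i] at h1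
      omega
    subst hii
    have hb : b = b' := by
      have := congrFun heq i
      simp only [hf, dif_pos rfl] at this
      rcases b with _|_ <;> rcases b' with _|_ <;> simp_all
    subst hb
    have hg : g = g' := by
      funext ⟨j, hj⟩
      have := congrFun heq j
      simp only [hf, dif_neg hj] at this
      cases hh : g ⟨j, hj⟩ <;> cases hh' : g' ⟨j, hj⟩
      · rfl
      · exact absurd this (by simp [hh, hh'])
      · exact absurd this (by simp [hh, hh'])
      · rfl
    subst hg
    rfl
  have himg : {z : Fin d → ℤ | (∀ i, z i ∈ ({0, 1, 2, 3} : Set ℤ)) ∧ ∃! i, z i = 0 ∨ z i = 3}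
      = Set.range f := by
    ext z
    constructor
    · rintro ⟨h03, i, hi, huniq⟩
      have hxo : ∀ j, j ≠ i → z j = 1 ∨ z j = 2 := by
        intro j hj
        have hj' : ¬(z j = 0 ∨ z j = 3) := fun h => hj (huniq j h)
        have := h03 j
        simp only [Set.mem_insert_iff, Set.mem_singleton_iff] at this
        push_neg at hj'
        tauto
      refine ⟨⟨i, decide (z i = 0), fun j => decide (z j.1 = 1)⟩, ?_⟩
      funext j
      by_cases hj : j = i
      · subst hj
        simp only [hf, dif_pos rfl]
        rcases hi with h | h <;> simp [h]
      · simp only [hf, dif_neg hj]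
        rcases hxo j hj with h | h <;> simp [h]
    · rintro ⟨t, rfl⟩
      refine ⟨fun j => ?_, t.1, hval1 t, fun j hj => ?_⟩
      · by_cases hj : j = t.1
        · subst hj; rcases hval1 t with h | h <;> simp [h]
        · rcases hval2 t j hj with h | h <;> simp [h]
      · by_contra hne
        have := hval2 t j hne
        omega
  rw [himg]
  have h1 : (Set.range f).ncard = Nat.card T := by
    rw [← Nat.card_coe_set_eq]
    exact (Nat.card_congr (Equiv.ofInjective f hinj)).symm
  rw [h1, Nat.card_eq_fintype_card]
  have hsub : ∀ i : Fin d, Fintype.card {j : Fin d // j ≠ i} = d - 1 := by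
    intro i
    rw [Fintype.card_subtype_compl, Fintype.card_subtype_eq, Fintype.card_fin]
  show Fintype.card ((i : Fin d) × Bool × ({ j // j ≠ i } → Bool)) = d * 2 ^ d
  have : Fintype.card ((i : Fin d) × Bool × ({ j // j ≠ i } → Bool))
      = ∑ i : Fin d, 2 * 2 ^ (d - 1) := by
    rw [Fintype.card_sigma]
    congr 1
    funext i
    rw [Fintype.card_prod, Fintype.card_bool, Fintype.card_fun, Fintype.card_bool, hsub i]
  rw [this, Finset.sum_const, Finset.card_univ, Fintype.card_fin, smul_eq_mul]
  have : 2 * 2 ^ (d - 1) = 2 ^ d := by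
    conv_rhs => rw [show d = 1 + (d - 1) by omega]
    rw [pow_add, pow_one]
  rw [this]


/-- The lower-bound construction: with `R` the integer points of `{0,1,2,3}^d` having
exactly one coordinate in `{0,3}` and `Q = {1,2}^d`, the family
`F = {conv(Q ∪ R \ {x}) : x ∈ R}` has `d·2^d` members, every `d·2^d - 1` of them
have 3 colinear integer points in their intersection, but the integer points of the
full intersection are exactly `Q`. -/
theorem stmt5 (d : ℕ) (hd : 1 ≤ d)
    (R : Set (Fin d → ℤ))
    (hR : R = {z | (∀ i, z i ∈ ({0, 1, 2, 3} : Set ℤ)) ∧ ∃! i, z i = 0 ∨ z i = 3})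
    (Q : Set (Fin d → ℤ)) (hQ : Q = {z | ∀ i, z i = 1 ∨ z i = 2})
    (C : (Fin d → ℤ) → Set (EuclideanSpace ℝ (Fin d)))
    (hC : ∀ x, C x =
      convexHull ℝ ((fun z => (WithLp.toLp 2 (fun i => (z i : ℝ)) : EuclideanSpace ℝ (Fin d))) ''
        (Q ∪ (R \ {x})))) :
    R.ncard = d * 2 ^ d ∧
    (∀ x₀ ∈ R, ∃ a y : Fin d → ℤ, y ≠ 0 ∧ ∀ j : Fin 3,
      (WithLp.toLp 2 (fun i => (a i : ℝ) + (j : ℕ) * (y i : ℝ)) : EuclideanSpace ℝ (Fin d)) ∈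
        ⋂ x ∈ R \ {x₀}, C x) ∧
    {z : Fin d → ℤ |
      (WithLp.toLp 2 (fun i => (z i : ℝ)) : EuclideanSpace ℝ (Fin d)) ∈ ⋂ x ∈ R, C x} = Q := by
  have hmemR : ∀ {w : Fin d → ℤ}, w ∈ R ↔
      ((∀ i, w i ∈ ({0, 1, 2, 3} : Set ℤ)) ∧ ∃! i, w i = 0 ∨ w i = 3) := by
    intro w; rw [hR]; rfl
  have hmemQ : ∀ {w : Fin d → ℤ}, w ∈ Q ↔ (∀ i, w i = 1 ∨ w i = 2) := by
    intro w; rw [hQ]; rfl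
  have hQR : ∀ {w : Fin d → ℤ}, w ∈ Q ∪ R →
      ((∀ i, w i = 1 ∨ w i = 2) ∨
        ((∀ i, w i ∈ ({0, 1, 2, 3} : Set ℤ)) ∧ ∃! i, w i = 0 ∨ w i = 3)) := by
    intro w hw
    rcases hw with hw | hw
    · exact Or.inl (hmemQ.1 hw)
    · exact Or.inr (hmemR.1 hw)
  refine ⟨by rw [hR]; exact count_R d hd, ?_, ?_⟩
  · -- part 2: lines through x₀
    intro x₀ hx₀
    obtain ⟨i, hxi, hxo⟩ := R_struct (hmemR.1 hx₀)
    set y : Fin d → ℤ := fun k => if k = i then (if x₀ i = 0 then 1 else -1) else 0 with hy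
    refine ⟨x₀, y, ?_, ?_⟩
    · intro h
      have := congrFun h i
      simp only [hy, if_pos rfl, Pi.zero_apply] at this
      split_ifs at this <;> omega
    · intro j
      rw [Set.mem_iInter₂]
      intro x hx
      rw [hC x]
      set zj : Fin d → ℤ := fun k => x₀ k + (j : ℕ) * y k with hzj
      have hpt : (WithLp.toLp 2 (fun k => (x₀ k : ℝ) + (j : ℕ) * (y k : ℝ)) : EuclideanSpace ℝ (Fin d))
          = WithLp.toLp 2 (fun k => (zj k : ℝ)) := by
        congr 1; funext k; simp only [hzj]; push_cast; ring
      rw [hpt]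
      apply subset_convexHull
      refine ⟨zj, ?_, rfl⟩
      have hxne : x ≠ x₀ := by
        intro h; exact hx.2 (by simp [h])
      have hj3 : (j : ℕ) = 0 ∨ (j : ℕ) = 1 ∨ (j : ℕ) = 2 := by omega
      rcases hj3 with hj | hj
      · -- zj = x₀
        have : zj = x₀ := by funext k; simp [hzj, hj]
        rw [this]
        exact Or.inr ⟨hx₀, fun h => hxne (Set.mem_singleton_iff.1 h).symm⟩
      · -- zj ∈ Q
        left
        rw [hmemQ]
        intro k
        by_cases hk : k = i
        · subst hk
          simp only [hzj, hy, if_pos rfl]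
          rcases hxi with h | h <;> rw [h] <;> simp [h] <;> omega
        · simp only [hzj, hy, if_neg hk]
          have := hxo k hk
          omega
  · -- part 3
    ext z
    simp only [Set.mem_setOf_eq]
    constructor
    · intro hz
      rw [Set.mem_iInter₂] at hz
      -- a witness member of R
      have hi0 : (0 : ℕ) < d := hd
      set x₁ : Fin d → ℤ := fun k => if k = ⟨0, hi0⟩ then 0 else 1 with hx₁def
      have hx₁ : x₁ ∈ R := by
        rw [hmemR]
        constructor
        · intro k; by_cases hk : k = ⟨0, hi0⟩ <;> simp [hx₁def, hk]
        · refine ⟨⟨0, hi0⟩, by simp [hx₁def], fun k hk => ?_⟩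
          by_contra hne
          simp only [hx₁def, if_neg hne] at hk
          omega
      have hz1 := hz x₁ hx₁
      rw [hC x₁] at hz1
      have hz1' : (WithLp.toLp 2 (fun i => (z i : ℝ)) : EuclideanSpace ℝ (Fin d)) ∈
          convexHull ℝ ((fun w => (WithLp.toLp 2 (fun i => (w i : ℝ)) : EuclideanSpace ℝ (Fin d))) ''
            (Q ∪ R)) := by
        refine convexHull_mono (Set.image_mono ?_) hz1
        exact Set.union_subset_union_right _ Set.diff_subset
      have hineq : ∀ (u : Fin d → ℤ) (c : ℤ), (∀ w ∈ Q ∪ R, c ≤ ∑ k, u k * w k) →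
          c ≤ ∑ k, u k * z k := by
        intro u c h
        have := hull_int_ge d (Q ∪ R) u c h hz1'
        simp only [WithLp.ofLp_toLp] at this
        exact_mod_cast this
      have hc03 : ∀ k, 0 ≤ z k ∧ z k ≤ 3 := by
        intro k₁
        constructor
        · have := hineq (fun k => if k = k₁ then 1 else 0) 0 (fun w hw => by
            rw [sum_one_ind]
            have := (gen_bounds (hQR hw)).1 k₁
            omega)
          rw [sum_one_ind] at this; omega
        · have := hineq (fun k => if k = k₁ then -1 else 0) (-3) (fun w hw => by
            rw [sum_one_ind]
            have := (gen_bounds (hQR hw)).1 k₁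
            omega)
          rw [sum_one_ind] at this; omega
      have hpair : ∀ i j, i ≠ j → 1 ≤ z i + z j ∧ z i + z j ≤ 5 ∧ -2 ≤ z i - z j := by
        intro i j hij
        refine ⟨?_, ?_, ?_⟩
        · have := hineq (fun k => if k = i then 1 else if k = j then 1 else 0) 1 (fun w hw => by
            rw [sum_two_ind i j hij]
            have := (gen_bounds (hQR hw)).2 i j hij
            omega)
          rw [sum_two_ind i j hij] at this; omega
        · have := hineq (fun k => if k = i then -1 else if k = j then -1 else 0) (-5)
            (fun w hw => by
              rw [sum_two_ind i j hij]
              have := (gen_bounds (hQR hw)).2 i j hij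
              omega)
          rw [sum_two_ind i j hij] at this; omega
        · have := hineq (fun k => if k = i then 1 else if k = j then -1 else 0) (-2)
            (fun w hw => by
              rw [sum_two_ind i j hij]
              have := (gen_bounds (hQR hw)).2 i j hij
              omega)
          rw [sum_two_ind i j hij] at this; omega
      rcases classify hc03 hpair with hzQ | hzR
      · exact hmemQ.2 hzQ
      · -- contradiction: z ∈ R, but (ι z) ∈ C z is impossible
        exfalso
        have hzR' : z ∈ R := hmemR.2 hzR
        obtain ⟨i, hzi, hzo⟩ := R_struct hzR
        set u : Fin d → ℤ := fun k =>
          if k = i then (if z i = 0 then 3 * (d : ℤ) else -(3 * (d : ℤ)))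
          else (if z k = 1 then 1 else -1) with hu
        have hgen : ∀ w ∈ Q ∪ (R \ {z}), (∑ k, u k * z k) + 1 ≤ ∑ k, u k * w k := by
          intro w hw
          have hwQR : w ∈ Q ∪ R := Set.union_subset_union_right _ Set.diff_subset hw
          have hw03 := (gen_bounds (hQR hwQR)).1
          have hne : w ≠ z := by
            rcases hw with hw | hw
            · intro h
              have := hmemQ.1 hw i
              rw [h] at this
              omega
            · intro h; exact hw.2 (by simp [h])
          refine excl_ineq hd i hzi hzo u (fun k => by rw [hu]) w hw03 ?_ hne
          · intro hwi j hj
            rcases hw with hw | hw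
            · exact hmemQ.1 hw j
            · obtain ⟨i', hwi', hwo'⟩ := R_struct (hmemR.1 hw.1)
              by_cases hii : i = i'
              · exact hwo' j (hii ▸ hj)
              · have := hwo' i (fun h => hii h)
                rw [hwi] at this
                rcases hzi with h | h <;> omega
        have hzz := hz z hzR'
        rw [hC z] at hzz
        have := hull_int_ge d (Q ∪ (R \ {z})) u ((∑ k, u k * z k) + 1) hgen hzz
        simp only [WithLp.ofLp_toLp] at this
        have h2 : (∑ k, u k * z k) + 1 ≤ ∑ k, u k * z k := by exact_mod_cast this
        omega
    · intro hzQ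
      rw [Set.mem_iInter₂]
      intro x hx
      rw [hC x]
      exact subset_convexHull _ _ ⟨z, Or.inl hzQ, rfl⟩
end

section
/- Let ρ be a Minkowski norm on ℝ^d whose unit ball is a polytope with k facets, and let F be a finite family of compact convex sets in ℝ^d. If the intersection of every subfamily of at most k·d sets of F has ρ-diameter at least 1, then the intersection of all of F has ρ-diameter at least 1. -/
open scoped RealInnerProductSpace

open scoped Pointwise

private lemma inner_linear {d : ℕ} (v : EuclideanSpace ℝ (Fin d)) :
    IsLinearMap ℝ (fun x : EuclideanSpace ℝ (Fin d) => ⟪x, v⟫) :=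
  ⟨fun x y => inner_add_left x y v, fun c x => real_inner_smul_left x v c⟩

private lemma convexP {d m : ℕ} (v : Fin m → EuclideanSpace ℝ (Fin d)) :
    Convex ℝ {x : EuclideanSpace ℝ (Fin d) | ∀ i, |⟪x, v i⟫| ≤ (1:ℝ)} := by
  have he : {x : EuclideanSpace ℝ (Fin d) | ∀ i, |⟪x, v i⟫| ≤ (1:ℝ)}
      = ⋂ i, ({x | ⟪x, v i⟫ ≤ (1:ℝ)} ∩ {x | (-1:ℝ) ≤ ⟪x, v i⟫}) := by
    ext x; simp [abs_le, forall_and, and_comm]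
  rw [he]
  exact convex_iInter fun i =>
    (convex_halfSpace_le (inner_linear (v i)) 1).inter
      (convex_halfSpace_ge (inner_linear (v i)) (-1))

private lemma zero_mem_intP {d m : ℕ} (v : Fin m → EuclideanSpace ℝ (Fin d))
    (P : Set (EuclideanSpace ℝ (Fin d)))
    (hP : P = {x | ∀ i, |⟪x, v i⟫| ≤ (1:ℝ)}) (hPi : (interior P).Nonempty) :
    (0 : EuclideanSpace ℝ (Fin d)) ∈ interior P := by
  obtain ⟨w, hw⟩ := hPi
  have hconv : Convex ℝ (interior P) := (hP ▸ convexP v).interior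
  have hsym : P = -P := by
    rw [hP]; ext x; simp [Set.mem_neg, inner_neg_left]
  have hneg : -w ∈ interior P := by
    have e1 : -P = (-1 : ℝ) • P := by
      ext x; simp [Set.mem_neg, Set.mem_smul_set_iff_inv_smul_mem₀ (by norm_num : (-1:ℝ) ≠ 0)]
    rw [hsym, e1, interior_smul₀ (by norm_num : (-1:ℝ) ≠ 0)]
    exact ⟨w, hw, by simp⟩
  have h2 := hconv hw hneg (by norm_num : (0:ℝ) ≤ 1/2) (by norm_num : (0:ℝ) ≤ 1/2)
    (by norm_num)
  have h0 : (1/2:ℝ) • w + (1/2:ℝ) • (-w) = (0 : EuclideanSpace ℝ (Fin d)) := by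
    rw [smul_neg, add_neg_cancel]
  rwa [h0] at h2

private lemma gauge_key {d m : ℕ} (hm : 0 < m) (v : Fin m → EuclideanSpace ℝ (Fin d))
    (P : Set (EuclideanSpace ℝ (Fin d)))
    (hP : P = {x | ∀ i, |⟪x, v i⟫| ≤ (1:ℝ)}) (hPi : (interior P).Nonempty)
    (z : EuclideanSpace ℝ (Fin d)) :
    (1:ℝ) ≤ gauge P z ↔ ∃ i, (1:ℝ) ≤ |⟪z, v i⟫| := by
  have h0 : (0 : EuclideanSpace ℝ (Fin d)) ∈ interior P :=
    zero_mem_intP v P hP hPi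
  have habs : Absorbent ℝ P :=
    absorbent_nhds_zero (mem_interior_iff_mem_nhds.mp h0)
  haveI : Nonempty (Fin m) := ⟨⟨0, hm⟩⟩
  constructor
  · intro hg
    by_contra hc
    push_neg at hc
    set c : ℝ := Finset.univ.sup' Finset.univ_nonempty (fun i => |⟪z, v i⟫|) with hcdef
    have hc1 : c < 1 := by
      rw [hcdef, Finset.sup'_lt_iff]
      exact fun i _ => hc i
    have hc0 : 0 ≤ c := le_trans (abs_nonneg _)
      (Finset.le_sup' (fun i => |⟪z, v i⟫|) (Finset.mem_univ (Classical.arbitrary (Fin m))))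
    set t : ℝ := (c + 1) / 2 with htdef
    have ht0 : 0 < t := by rw [htdef]; linarith
    have hct : c ≤ t := by rw [htdef]; linarith
    have ht1 : t < 1 := by rw [htdef]; linarith
    have hz : z ∈ t • P := by
      rw [Set.mem_smul_set_iff_inv_smul_mem₀ (ne_of_gt ht0), hP]
      intro i
      have : |⟪(t⁻¹ • z : EuclideanSpace ℝ (Fin d)), v i⟫| = t⁻¹ * |⟪z, v i⟫| := by
        rw [real_inner_smul_left, abs_mul, abs_of_pos (inv_pos.mpr ht0)]
      rw [this]
      have hle : |⟪z, v i⟫| ≤ c := by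
        rw [hcdef]; exact Finset.le_sup' (fun i => |⟪z, v i⟫|) (Finset.mem_univ i)
      calc t⁻¹ * |⟪z, v i⟫| ≤ t⁻¹ * t := by
            apply mul_le_mul_of_nonneg_left (le_trans hle hct) (le_of_lt (inv_pos.mpr ht0))
        _ = 1 := inv_mul_cancel₀ (ne_of_gt ht0)
    have := gauge_le_of_mem (le_of_lt ht0) hz
    linarith
  · rintro ⟨i, hi⟩
    refine le_csInf habs.gauge_set_nonempty ?_
    rintro t ⟨ht0, hz⟩
    obtain ⟨w, hw, rfl⟩ := hz
    rw [hP] at hw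
    have : |⟪(t • w : EuclideanSpace ℝ (Fin d)), v i⟫| = t * |⟪w, v i⟫| := by
      rw [real_inner_smul_left, abs_mul, abs_of_pos ht0]
    rw [this] at hi
    calc (1:ℝ) ≤ t * |⟪w, v i⟫| := hi
      _ ≤ t * 1 := mul_le_mul_of_nonneg_left (hw i) (le_of_lt ht0)
      _ = t := mul_one t

private lemma helly_contra {E : Type*} [AddCommGroup E] [Module ℝ E]
    [FiniteDimensional ℝ E] {ι : Type*} (A : ι → Set E) (s : Finset ι)
    (hconv : ∀ i ∈ s, Convex ℝ (A i)) (hemp : (⋂ i ∈ s, A i) = ∅) :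
    ∃ I ⊆ s, I.card ≤ Module.finrank ℝ E + 1 ∧ (⋂ i ∈ I, A i) = ∅ := by
  by_contra hcon
  push_neg at hcon
  have := Convex.helly_theorem' (𝕜 := ℝ) (F := A) (s := s) hconv ?_
  · rw [hemp] at this; exact Set.not_nonempty_empty this
  · intro I hIs hIcard
    exact hcon I hIs hIcard

/-- Helly-type theorem for the diameter in a polytopal Minkowski norm.  The unit
ball is the centrally symmetric polytope `P = {x : |⟨x, v i⟩| ≤ 1, i = 1,…,m}`
with `k = 2m` facets (each of the `2m` inequalities is irredundant, so it defines
a facet), and the norm is the gauge of `P`.  If every subfamily of at most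
`k·d = 2·m·d` sets of `F` has `ρ`-diameter at least 1, then so does `⋂ F`. -/
theorem stmt9 (d m : ℕ) (hm : 0 < m) (v : Fin m → EuclideanSpace ℝ (Fin d))
    (P : Set (EuclideanSpace ℝ (Fin d)))
    (hP : P = {x | ∀ i, |⟪x, v i⟫| ≤ (1 : ℝ)})
    (hPc : IsCompact P) (hPi : (interior P).Nonempty)
    -- each of the `2m` inequalities defines a facet: no two coincide and none is redundant
    (hdist : ∀ i j : Fin m, i ≠ j → v i ≠ v j ∧ v i ≠ -v j)
    (hirr : ∀ i : Fin m, ∃ x : EuclideanSpace ℝ (Fin d),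
      1 < ⟪x, v i⟫ ∧ ∀ j : Fin m, j ≠ i → |⟪x, v j⟫| ≤ 1)
    (F : Finset (Set (EuclideanSpace ℝ (Fin d)))) (hne : F.Nonempty)
    (hcomp : ∀ K ∈ F, IsCompact K) (hconv : ∀ K ∈ F, Convex ℝ K)
    (h : ∀ G ⊆ F, G.card ≤ 2 * m * d →
      ∃ x ∈ (⋂ K ∈ G, K), ∃ y ∈ (⋂ K ∈ G, K), (1 : ℝ) ≤ gauge P (x - y)) :
    ∃ x ∈ (⋂ K ∈ F, K), ∃ y ∈ (⋂ K ∈ F, K), (1 : ℝ) ≤ gauge P (x - y) := by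
  classical
  rcases Nat.eq_zero_or_pos d with hd0 | hd
  · subst hd0
    obtain ⟨x, -, y, -, hg⟩ := h ∅ (Finset.empty_subset F) (by simp)
    haveI : Subsingleton (EuclideanSpace ℝ (Fin 0)) :=
      ⟨fun a b => PiLp.ext fun i => i.elim0⟩
    have hxy : x - y = 0 := Subsingleton.elim _ _
    rw [hxy, gauge_zero] at hg
    linarith
  have hkey := gauge_key hm v P hP hPi
  set L : Fin m → Set (EuclideanSpace ℝ (Fin d) × EuclideanSpace ℝ (Fin d)) :=
    fun i => {p | (1:ℝ) ≤ ⟪p.1 - p.2, v i⟫} with hL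
  have hLconv : ∀ i, Convex ℝ (L i) := by
    intro i
    have hlin : IsLinearMap ℝ
        (fun p : EuclideanSpace ℝ (Fin d) × EuclideanSpace ℝ (Fin d) =>
          ⟪p.1 - p.2, v i⟫) := by
      constructor
      · intro p q
        simp only [Prod.fst_add, Prod.snd_add]
        rw [show p.1 + q.1 - (p.2 + q.2) = (p.1 - p.2) + (q.1 - q.2) by abel,
          inner_add_left]
      · intro c p
        simp only [Prod.smul_fst, Prod.smul_snd]
        rw [show c • p.1 - c • p.2 = c • (p.1 - p.2) by rw [smul_sub],
          real_inner_smul_left, smul_eq_mul]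
    exact convex_halfSpace_ge hlin 1
  by_cases hcase : ∃ i, ((⋂ K ∈ F, ((K ×ˢ K) :
      Set (EuclideanSpace ℝ (Fin d) × EuclideanSpace ℝ (Fin d)))) ∩ L i).Nonempty
  · obtain ⟨i, p, hp, hpL⟩ := hcase
    have hp' := Set.mem_iInter₂.mp hp
    refine ⟨p.1, Set.mem_iInter₂.mpr fun K hK => (hp' K hK).1,
      p.2, Set.mem_iInter₂.mpr fun K hK => (hp' K hK).2, ?_⟩
    exact (hkey (p.1 - p.2)).mpr ⟨i, le_trans hpL (le_abs_self _)⟩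
  · exfalso
    push_neg at hcase
    have hcase' : ∀ i, ((⋂ K ∈ F, ((K ×ˢ K) :
        Set (EuclideanSpace ℝ (Fin d) × EuclideanSpace ℝ (Fin d)))) ∩ L i) = ∅ :=
      fun i => hcase i
    have hrank : Module.finrank ℝ
        (EuclideanSpace ℝ (Fin d) × EuclideanSpace ℝ (Fin d)) = d + d := by
      rw [Module.finrank_prod, finrank_euclideanSpace_fin]
    have key : ∀ i : Fin m, ∃ G : Finset (Set (EuclideanSpace ℝ (Fin d))),
        G ⊆ F ∧ G.card ≤ 2*d ∧
        ((⋂ K ∈ G, ((K ×ˢ K) :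
          Set (EuclideanSpace ℝ (Fin d) × EuclideanSpace ℝ (Fin d)))) ∩ L i) = ∅ := by
      intro i
      set A : Option (Set (EuclideanSpace ℝ (Fin d))) →
          Set (EuclideanSpace ℝ (Fin d) × EuclideanSpace ℝ (Fin d)) :=
        fun o => o.elim (L i) (fun K => K ×ˢ K) with hA
      have hmemK : ∀ K : Set (EuclideanSpace ℝ (Fin d)),
          some K ∈ insert none (F.image some) → K ∈ F := by
        intro K hK
        rcases Finset.mem_insert.mp hK with h' | h'
        · exact absurd h' (by simp)
        · obtain ⟨K', hK', hKK'⟩ := Finset.mem_image.mp h'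
          rwa [show K' = K from Option.some_injective _ hKK'] at hK'
      have hconvA : ∀ o ∈ insert none (F.image some), Convex ℝ (A o) := by
        rintro (_ | K) ho
        · exact hLconv i
        · have hK := hmemK K ho
          exact (hconv K hK).prod (hconv K hK)
      have hempA : (⋂ o ∈ insert none (F.image some), A o) = ∅ := by
        have heq : (⋂ o ∈ insert none (F.image some), A o)
            = (⋂ K ∈ F, ((K ×ˢ K) :
              Set (EuclideanSpace ℝ (Fin d) × EuclideanSpace ℝ (Fin d)))) ∩ L i := by
          ext p
          constructor
          · intro hp
            have hp' := Set.mem_iInter₂.mp hp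
            refine ⟨Set.mem_iInter₂.mpr fun K hK => ?_, ?_⟩
            · exact hp' (some K) (Finset.mem_insert_of_mem (Finset.mem_image_of_mem _ hK))
            · exact hp' none (Finset.mem_insert_self _ _)
          · rintro ⟨hp1, hp2⟩
            refine Set.mem_iInter₂.mpr ?_
            rintro (_ | K) ho
            · exact hp2
            · exact Set.mem_iInter₂.mp hp1 K (hmemK K ho)
        rw [heq]; exact hcase' i
      obtain ⟨I, hIs, hIcard, hIemp⟩ := helly_contra A _ hconvA hempA
      rw [hrank] at hIcard
      by_cases hnone : none ∈ I
      · refine ⟨F.filter (fun K => some K ∈ I), Finset.filter_subset _ _, ?_, ?_⟩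
        · have hinj : ∀ K ∈ F.filter (fun K => some K ∈ I), some K ∈ I.erase none := by
            intro K hK
            exact Finset.mem_erase.mpr ⟨by simp, (Finset.mem_filter.mp hK).2⟩
          have hcard1 : (F.filter (fun K => some K ∈ I)).card ≤ (I.erase none).card :=
            Finset.card_le_card_of_injOn some hinj
              (fun a _ b _ hab => Option.some_injective _ hab)
          have hcard2 : (I.erase none).card = I.card - 1 :=
            Finset.card_erase_of_mem hnone
          have hIpos : 1 ≤ I.card := Finset.card_pos.mpr ⟨none, hnone⟩
          omega
        · rw [Set.eq_empty_iff_forall_notMem]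
          rintro p ⟨hp1, hp2⟩
          have : p ∈ ⋂ o ∈ I, A o := by
            refine Set.mem_iInter₂.mpr ?_
            rintro (_ | K) ho
            · exact hp2
            · have hKF : K ∈ F := hmemK K (hIs ho)
              exact Set.mem_iInter₂.mp hp1 K (Finset.mem_filter.mpr ⟨hKF, ho⟩)
          rw [hIemp] at this
          exact this
      · -- none ∉ I : the K's alone have empty intersection; use Helly in dimension d
        have hG0emp : (⋂ K ∈ F.filter (fun K => some K ∈ I), K) = ∅ := by
          rw [Set.eq_empty_iff_forall_notMem]
          intro x hx
          have : ((x, x) : EuclideanSpace ℝ (Fin d) × EuclideanSpace ℝ (Fin d))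
              ∈ ⋂ o ∈ I, A o := by
            refine Set.mem_iInter₂.mpr ?_
            rintro (_ | K) ho
            · exact absurd ho hnone
            · have hKF : K ∈ F := hmemK K (hIs ho)
              have hxK : x ∈ K :=
                Set.mem_iInter₂.mp hx K (Finset.mem_filter.mpr ⟨hKF, ho⟩)
              exact ⟨hxK, hxK⟩
          rw [hIemp] at this
          exact this
        obtain ⟨G, hGs, hGcard, hGemp⟩ := helly_contra
          (fun K : Set (EuclideanSpace ℝ (Fin d)) => K)
          (F.filter (fun K => some K ∈ I))
          (fun K hK => hconv K (Finset.mem_of_mem_filter K hK)) hG0emp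
        refine ⟨G, hGs.trans (Finset.filter_subset _ _), ?_, ?_⟩
        · rw [finrank_euclideanSpace_fin] at hGcard
          omega
        · rw [Set.eq_empty_iff_forall_notMem]
          rintro p ⟨hp1, -⟩
          have : p.1 ∈ ⋂ K ∈ G, K :=
            Set.mem_iInter₂.mpr fun K hK => (Set.mem_iInter₂.mp hp1 K hK).1
          rw [hGemp] at this
          exact this
    choose Gf hGfF hGfcard hGfemp using key
    set G : Finset (Set (EuclideanSpace ℝ (Fin d))) := Finset.univ.biUnion Gf with hG
    have hGF : G ⊆ F := Finset.biUnion_subset.mpr fun i _ => hGfF i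
    have hGcard : G.card ≤ 2*m*d := by
      calc G.card ≤ ∑ i, (Gf i).card := Finset.card_biUnion_le
        _ ≤ ∑ _i : Fin m, 2*d := Finset.sum_le_sum (fun i _ => hGfcard i)
        _ = m * (2*d) := by simp [Finset.sum_const, Finset.card_univ, mul_comm]
        _ = 2*m*d := by ring
    obtain ⟨x, hx, y, hy, hg⟩ := h G hGF hGcard
    obtain ⟨i, hi⟩ := (hkey (x - y)).mp hg
    have hmemGf : ∀ K ∈ Gf i, K ∈ G := fun K hK =>
      Finset.mem_biUnion.mpr ⟨i, Finset.mem_univ i, hK⟩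
    have hx' : ∀ K ∈ Gf i, x ∈ K := fun K hK =>
      Set.mem_iInter₂.mp hx K (hmemGf K hK)
    have hy' : ∀ K ∈ Gf i, y ∈ K := fun K hK =>
      Set.mem_iInter₂.mp hy K (hmemGf K hK)
    rcases le_abs.mp hi with h1 | h1
    · have : ((x, y) : EuclideanSpace ℝ (Fin d) × EuclideanSpace ℝ (Fin d))
          ∈ (⋂ K ∈ Gf i, ((K ×ˢ K) :
            Set (EuclideanSpace ℝ (Fin d) × EuclideanSpace ℝ (Fin d)))) ∩ L i :=
        ⟨Set.mem_iInter₂.mpr fun K hK => ⟨hx' K hK, hy' K hK⟩, h1⟩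
      rw [hGfemp i] at this
      exact this
    · have h2 : (1:ℝ) ≤ ⟪y - x, v i⟫ := by
        rw [show y - x = -(x - y) by abel, inner_neg_left]
        exact h1
      have : ((y, x) : EuclideanSpace ℝ (Fin d) × EuclideanSpace ℝ (Fin d))
          ∈ (⋂ K ∈ Gf i, ((K ×ˢ K) :
            Set (EuclideanSpace ℝ (Fin d) × EuclideanSpace ℝ (Fin d)))) ∩ L i :=
        ⟨Set.mem_iInter₂.mpr fun K hK => ⟨hy' K hK, hx' K hK⟩, h2⟩
      rw [hGfemp i] at this
      exact this
end

section
/- Let p ≥ 1 and F be a finite nonempty family of compact convex sets in ℝ^d. If the intersection of every subfamily of at most 2d² sets of F has ℓ_p-diameter at least 1, then the intersection of all of F has ℓ_p-diameter at least d^{−1/p}. -/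
/-- The `ℓ_p` norm of a vector in `ℝ^d`. -/
noncomputable def lpNorm {d : ℕ} (p : ℝ) (z : EuclideanSpace ℝ (Fin d)) : ℝ :=
  (∑ i, |z i| ^ p) ^ (1 / p)

private lemma lpNorm_coord_le {d : ℕ} {p : ℝ} (hp : 1 ≤ p) (z : EuclideanSpace ℝ (Fin d))
    (i : Fin d) : |z i| ≤ lpNorm p z := by
  have hp0 : p ≠ 0 := by intro h; rw [h] at hp; linarith
  have h1 : |z i| = (|z i| ^ p) ^ (1 / p) := by
    rw [one_div, Real.rpow_rpow_inv (abs_nonneg _) hp0]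
  rw [h1, lpNorm]
  apply Real.rpow_le_rpow (Real.rpow_nonneg (abs_nonneg _) _)
  · exact Finset.single_le_sum (fun j _ => Real.rpow_nonneg (abs_nonneg _) _) (Finset.mem_univ i)
  · positivity

private lemma exists_coord {d : ℕ} {p : ℝ} (hp : 1 ≤ p) (hd : 0 < d)
    (z : EuclideanSpace ℝ (Fin d)) (hz : 1 ≤ lpNorm p z) :
    ∃ i, (d : ℝ) ^ (-(1 / p)) ≤ |z i| := by
  by_contra hc
  push_neg at hc
  have hp0 : (0 : ℝ) < p := lt_of_lt_of_le one_pos hp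
  have hdpos : (0 : ℝ) < (d : ℝ) := by exact_mod_cast hd
  have key : ∀ i, |z i| ^ p < (d : ℝ)⁻¹ := by
    intro i
    have h2 : |z i| ^ p < ((d : ℝ) ^ (-(1 / p))) ^ p :=
      Real.rpow_lt_rpow (abs_nonneg _) (hc i) hp0
    have h3 : ((d : ℝ) ^ (-(1 / p))) ^ p = (d : ℝ)⁻¹ := by
      rw [← Real.rpow_mul hdpos.le]
      rw [show -(1 / p) * p = -1 by field_simp]
      exact Real.rpow_neg_one _
    rwa [h3] at h2
  have : Nonempty (Fin d) := ⟨⟨0, hd⟩⟩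
  have hsum : ∑ i, |z i| ^ p < 1 := by
    calc ∑ i, |z i| ^ p < ∑ _i : Fin d, (d : ℝ)⁻¹ :=
          Finset.sum_lt_sum_of_nonempty Finset.univ_nonempty (fun i _ => key i)
      _ = 1 := by
          rw [Finset.sum_const, Finset.card_univ, Fintype.card_fin, nsmul_eq_mul]
          exact mul_inv_cancel₀ hdpos.ne'
  have hlt : lpNorm p z < 1 := by
    rw [lpNorm]
    exact Real.rpow_lt_one (Finset.sum_nonneg fun j _ => Real.rpow_nonneg (abs_nonneg _) _)
      hsum (by positivity)
  linarith


open Module in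
private lemma helly_halfspace {d : ℕ} (F : Finset (Set (EuclideanSpace ℝ (Fin d))))
    (hconv : ∀ K ∈ F, Convex ℝ K)
    (hnonempty : ∀ G ⊆ F, G.card ≤ d + 1 →
      (⋂ K ∈ G, (K : Set (EuclideanSpace ℝ (Fin d)))).Nonempty)
    (H : Set (EuclideanSpace ℝ (Fin d))) (hH : Convex ℝ H)
    (hempty : ∀ x ∈ ⋂ K ∈ F, (K : Set (EuclideanSpace ℝ (Fin d))), x ∉ H) :
    ∃ G ⊆ F, G.card ≤ d ∧
      ∀ x ∈ ⋂ K ∈ G, (K : Set (EuclideanSpace ℝ (Fin d))), x ∉ H := by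
  classical
  by_contra hcon
  push_neg at hcon
  have hfr : finrank ℝ (EuclideanSpace ℝ (Fin d)) = d := finrank_euclideanSpace_fin
  have hne : (⋂₀ ((insert H F : Finset (Set (EuclideanSpace ℝ (Fin d)))) :
      Set (Set (EuclideanSpace ℝ (Fin d))))).Nonempty := by
    apply Convex.helly_theorem_set' (𝕜 := ℝ)
    · intro X hX
      rcases Finset.mem_insert.mp hX with rfl | hX
      · exact hH
      · exact hconv X hX
    · intro G hG hGcard
      rw [hfr] at hGcard
      by_cases hHG : H ∈ G
      · have hsub : G.erase H ⊆ F := Finset.subset_insert_iff.mp hG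
        have hcard : (G.erase H).card ≤ d := by
          rw [Finset.card_erase_of_mem hHG]; omega
        obtain ⟨x, hx, hxH⟩ := hcon (G.erase H) hsub hcard
        refine ⟨x, Set.mem_sInter.mpr fun t ht => ?_⟩
        rw [Finset.mem_coe] at ht
        by_cases htH : t = H
        · exact htH ▸ hxH
        · exact Set.mem_iInter₂.mp hx t (Finset.mem_erase.mpr ⟨htH, ht⟩)
      · have hGF : G ⊆ F := fun K hK =>
          (Finset.mem_insert.mp (hG hK)).resolve_left (fun e => hHG (e ▸ hK))
        obtain ⟨x, hx⟩ := hnonempty G hGF hGcard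
        exact ⟨x, Set.mem_sInter.mpr fun t ht =>
          Set.mem_iInter₂.mp hx t (Finset.mem_coe.mp ht)⟩
  obtain ⟨x, hx⟩ := hne
  have hxF : x ∈ ⋂ K ∈ F, (K : Set (EuclideanSpace ℝ (Fin d))) :=
    Set.mem_iInter₂.mpr fun K hK => Set.mem_sInter.mp hx K (by simp [hK])
  have hxH : x ∈ H := Set.mem_sInter.mp hx H (by simp)
  exact hempty x hxF hxH

/-- If the intersection of every at most `2d²` sets of a finite nonempty family of
compact convex sets has `ℓ_p`-diameter at least 1, then the intersection of the
whole family has `ℓ_p`-diameter at least `d^{-1/p}`. -/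
theorem stmt10 (d : ℕ) (p : ℝ) (hp : 1 ≤ p)
    (F : Finset (Set (EuclideanSpace ℝ (Fin d)))) (hne : F.Nonempty)
    (hcomp : ∀ K ∈ F, IsCompact K) (hconv : ∀ K ∈ F, Convex ℝ K)
    (h : ∀ G ⊆ F, G.card ≤ 2 * d ^ 2 →
      ∃ x ∈ (⋂ K ∈ G, K), ∃ y ∈ (⋂ K ∈ G, K), (1 : ℝ) ≤ lpNorm p (x - y)) :
    ∃ x ∈ (⋂ K ∈ F, K), ∃ y ∈ (⋂ K ∈ F, K),
      (d : ℝ) ^ (-(1 / p)) ≤ lpNorm p (x - y) := by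
  classical
  have hp0 : (0 : ℝ) < p := lt_of_lt_of_le one_pos hp
  rcases Nat.eq_zero_or_pos d with hd0 | hd
  · subst hd0
    obtain ⟨x, -, y, -, hxy⟩ := h ∅ (Finset.empty_subset F) (by simp)
    exfalso
    have hz : lpNorm p (x - y) = 0 := by
      rw [lpNorm, Finset.univ_eq_empty, Finset.sum_empty,
        Real.zero_rpow (by positivity : (0:ℝ) < 1 / p).ne']
    linarith
  -- d ≥ 1
  have hdd : d + 1 ≤ 2 * d ^ 2 := by nlinarith
  have hnonempty : ∀ G ⊆ F, G.card ≤ d + 1 →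
      (⋂ K ∈ G, (K : Set (EuclideanSpace ℝ (Fin d)))).Nonempty := by
    intro G hG hGcard
    obtain ⟨x, hx, -⟩ := h G hG (le_trans hGcard hdd)
    exact ⟨x, hx⟩
  set r : ℝ := (d : ℝ) ^ (-(1 / p)) with hr
  set S : Set (EuclideanSpace ℝ (Fin d)) := ⋂ K ∈ F, K with hSdef
  obtain ⟨K0, hK0⟩ := hne
  have hSclosed : IsClosed S := by
    rw [hSdef]
    exact isClosed_biInter (fun K hK => (hcomp K hK).isClosed)
  have hScomp : IsCompact S :=
    (hcomp K0 hK0).of_isClosed_subset hSclosed (Set.biInter_subset_of_mem hK0)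
  have hSne : S.Nonempty := by
    have hh := Convex.helly_theorem_set' (𝕜 := ℝ) (F := F) hconv (fun G hG hGcard => by
      rw [finrank_euclideanSpace_fin] at hGcard
      obtain ⟨x, hx⟩ := hnonempty G hG hGcard
      exact ⟨x, Set.mem_sInter.mpr fun t ht => Set.mem_iInter₂.mp hx t (Finset.mem_coe.mp ht)⟩)
    obtain ⟨x, hx⟩ := hh
    exact ⟨x, Set.mem_iInter₂.mpr fun K hK => Set.mem_sInter.mp hx K (by simp [hK])⟩
  -- maximizers and minimizers of each coordinate on S
  have hproj : ∀ i : Fin d, Continuous fun x : EuclideanSpace ℝ (Fin d) => x i :=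
    fun i => (EuclideanSpace.proj i).continuous
  have hmax : ∀ i : Fin d, ∃ a ∈ S, ∀ x ∈ S, x i ≤ a i := by
    intro i
    obtain ⟨a, haS, ha⟩ := hScomp.exists_isMaxOn hSne ((hproj i).continuousOn)
    exact ⟨a, haS, fun x hx => ha hx⟩
  have hmin : ∀ i : Fin d, ∃ b ∈ S, ∀ x ∈ S, b i ≤ x i := by
    intro i
    obtain ⟨b, hbS, hb⟩ := hScomp.exists_isMinOn hSne ((hproj i).continuousOn)
    exact ⟨b, hbS, fun x hx => hb hx⟩
  choose a haS haM using hmax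
  choose b hbS hbM using hmin
  have hsub_apply : ∀ (x y : EuclideanSpace ℝ (Fin d)) (i : Fin d),
      (x - y) i = x i - y i := fun _ _ _ => rfl
  by_cases hbig : ∃ i, r ≤ a i i - b i i
  · obtain ⟨i, hi⟩ := hbig
    refine ⟨a i, haS i, b i, hbS i, ?_⟩
    calc r ≤ a i i - b i i := hi
      _ ≤ |(a i - b i) i| := by rw [hsub_apply]; exact le_abs_self _
      _ ≤ lpNorm p (a i - b i) := lpNorm_coord_le hp _ i
  push_neg at hbig
  exfalso
  have hne' : (Finset.univ : Finset (Fin d)).Nonempty := ⟨⟨0, hd⟩, Finset.mem_univ _⟩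
  set δ : ℝ := Finset.univ.inf' hne' (fun i => r - (a i i - b i i)) with hδdef
  have hδpos : 0 < δ := by
    rw [hδdef, Finset.lt_inf'_iff]
    intro i _
    linarith [hbig i]
  have hδle : ∀ i, δ ≤ r - (a i i - b i i) :=
    fun i => Finset.inf'_le _ (Finset.mem_univ i)
  set ε : ℝ := δ / 3 with hεdef
  have hεpos : 0 < ε := by rw [hεdef]; linarith
  -- upper halfspace claims
  have hupper : ∀ i : Fin d, ∃ G ⊆ F, G.card ≤ d ∧
      ∀ x ∈ ⋂ K ∈ G, (K : Set (EuclideanSpace ℝ (Fin d))), x i < a i i + ε := by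
    intro i
    obtain ⟨G, hGF, hGcard, hG⟩ := helly_halfspace F hconv hnonempty
      {x : EuclideanSpace ℝ (Fin d) | a i i + ε ≤ x i}
      (by
        have he : {x : EuclideanSpace ℝ (Fin d) | a i i + ε ≤ x i} =
            (EuclideanSpace.proj (𝕜 := ℝ) i).toLinearMap ⁻¹' Set.Ici (a i i + ε) := rfl
        rw [he]
        exact (convex_Ici _).linear_preimage _)
      (fun x hx hxH => by
        have h1 : x i ≤ a i i := haM i x hx
        have h2 : a i i + ε ≤ x i := hxH
        linarith)
    exact ⟨G, hGF, hGcard, fun x hx => not_le.mp (hG x hx)⟩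
  have hlower : ∀ i : Fin d, ∃ G ⊆ F, G.card ≤ d ∧
      ∀ x ∈ ⋂ K ∈ G, (K : Set (EuclideanSpace ℝ (Fin d))), b i i - ε < x i := by
    intro i
    obtain ⟨G, hGF, hGcard, hG⟩ := helly_halfspace F hconv hnonempty
      {x : EuclideanSpace ℝ (Fin d) | x i ≤ b i i - ε}
      (by
        have he : {x : EuclideanSpace ℝ (Fin d) | x i ≤ b i i - ε} =
            (EuclideanSpace.proj (𝕜 := ℝ) i).toLinearMap ⁻¹' Set.Iic (b i i - ε) := rfl
        rw [he]
        exact (convex_Iic _).linear_preimage _)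
      (fun x hx hxH => by
        have h1 : b i i ≤ x i := hbM i x hx
        have h2 : x i ≤ b i i - ε := hxH
        linarith)
    exact ⟨G, hGF, hGcard, fun x hx => not_le.mp (hG x hx)⟩
  choose Gp hGpF hGpcard hGp using hupper
  choose Gm hGmF hGmcard hGm using hlower
  set G : Finset (Set (EuclideanSpace ℝ (Fin d))) :=
    Finset.univ.biUnion (fun i => Gp i ∪ Gm i) with hGdef
  have hGF : G ⊆ F := by
    rw [hGdef]
    exact Finset.biUnion_subset.mpr fun i _ => Finset.union_subset (hGpF i) (hGmF i)
  have hGcard : G.card ≤ 2 * d ^ 2 := by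
    calc G.card ≤ ∑ i : Fin d, (Gp i ∪ Gm i).card := Finset.card_biUnion_le
      _ ≤ ∑ _i : Fin d, 2 * d := Finset.sum_le_sum (fun i _ =>
          le_trans (Finset.card_union_le _ _) (by
            have := hGpcard i
            have := hGmcard i
            omega))
      _ = d * (2 * d) := by
          rw [Finset.sum_const, Finset.card_univ, Fintype.card_fin, smul_eq_mul]
      _ = 2 * d ^ 2 := by ring
  obtain ⟨x, hx, y, hy, hxy⟩ := h G hGF hGcard
  obtain ⟨i, hi⟩ := exists_coord hp hd (x - y) hxy
  have hxmem : ∀ (J : Finset (Set (EuclideanSpace ℝ (Fin d)))), J ⊆ G →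
      ∀ z ∈ (⋂ K ∈ G, (K : Set (EuclideanSpace ℝ (Fin d)))),
        z ∈ ⋂ K ∈ J, (K : Set (EuclideanSpace ℝ (Fin d))) := by
    intro J hJ z hz
    exact Set.mem_iInter₂.mpr fun K hK => Set.mem_iInter₂.mp hz K (hJ hK)
  have hGpG : ∀ i, Gp i ⊆ G := fun i K hK => Finset.mem_biUnion.mpr
    ⟨i, Finset.mem_univ i, Finset.mem_union_left _ hK⟩
  have hGmG : ∀ i, Gm i ⊆ G := fun i K hK => Finset.mem_biUnion.mpr
    ⟨i, Finset.mem_univ i, Finset.mem_union_right _ hK⟩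
  have hx1 : x i < a i i + ε := hGp i x (hxmem (Gp i) (hGpG i) x hx)
  have hx2 : b i i - ε < x i := hGm i x (hxmem (Gm i) (hGmG i) x hx)
  have hy1 : y i < a i i + ε := hGp i y (hxmem (Gp i) (hGpG i) y hy)
  have hy2 : b i i - ε < y i := hGm i y (hxmem (Gm i) (hGmG i) y hy)
  rw [hsub_apply] at hi
  have habs : |x i - y i| < a i i - b i i + 2 * ε := by
    rw [abs_sub_lt_iff]
    constructor <;> linarith
  have := hδle i
  rw [hεdef] at habs
  linarith [hi.trans_lt habs]
end

section
/- Let P ⊆ ℝ^d be a centrally symmetric polytope with k facets and G a finite family of sets in ℝ^d × ℝ^d such that: (1) K ∩ (ℝ^d × L) is convex for every facet L of P and every K ∈ G; (2) (x,y) ∈ K implies (x+y,−y) ∈ K for every K ∈ G. If the intersection of every subfamily of at most k·d sets of G contains a point of ℝ^d × ∂P, then the intersection of all of G contains a point of ℝ^d × ∂P. -/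
open scoped RealInnerProductSpace

/-- The Radon-type lemma for a centrally symmetric polytope `P ⊆ ℝ^d` with
`k = 2m` facets `L 1, -L 1, …, L m, -L m`, where `L i` lies in the hyperplane
`{x : ⟨x, v i⟩ = 1}` and `∂P = ⋃ i (L i ∪ -L i)`.  For a finite family `G` of
subsets of `ℝ^d × ℝ^d` such that each `K ∩ (ℝ^d × L)` is convex for every facet
`L`, and `(x,y) ∈ K → (x+y,-y) ∈ K`: if every subfamily of at most `k·d` sets of
`G` meets `ℝ^d × ∂P`, then so does `⋂ G`. -/
theorem stmt15 (d m : ℕ) (hm : 0 < m)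
    (P : Set (EuclideanSpace ℝ (Fin d))) (hPsymm : P = -P)
    (v : Fin m → EuclideanSpace ℝ (Fin d))
    (L : Fin m → Set (EuclideanSpace ℝ (Fin d)))
    (hLv : ∀ i, L i ⊆ {x | ⟪x, v i⟫ = (1 : ℝ)})
    (hbd : frontier P = ⋃ i, (L i ∪ -(L i)))
    (G : Finset (Set (EuclideanSpace ℝ (Fin d) × EuclideanSpace ℝ (Fin d))))
    (hconv : ∀ K ∈ G, ∀ i : Fin m,
      Convex ℝ (K ∩ (Set.univ ×ˢ L i)) ∧ Convex ℝ (K ∩ (Set.univ ×ˢ (-(L i)))))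
    (hsymm : ∀ K ∈ G, ∀ x y : EuclideanSpace ℝ (Fin d), (x, y) ∈ K → (x + y, -y) ∈ K)
    (h : ∀ G' ⊆ G, G'.card ≤ 2 * m * d →
      ((⋂ K ∈ G', K) ∩ (Set.univ ×ˢ frontier P)).Nonempty) :
    ((⋂ K ∈ G, K) ∩ (Set.univ ×ˢ frontier P)).Nonempty := by
  classical
  revert hconv hsymm h
  induction G using Finset.strongInduction with
  | _ G ih =>
  intro hconv hsymm h
  by_cases hcard : G.card ≤ 2 * m * d
  · exact h G Finset.Subset.rfl hcard
  push_neg at hcard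
  -- a point avoiding one set, pushed onto a positive facet
  have hstep : ∀ K : {K // K ∈ G}, ∃ z : EuclideanSpace ℝ (Fin d) × EuclideanSpace ℝ (Fin d), ∃ i : Fin m,
      (∀ K' ∈ G, K' ≠ (K : Set (EuclideanSpace ℝ (Fin d) × EuclideanSpace ℝ (Fin d))) → z ∈ K') ∧ z.2 ∈ L i := by
    rintro ⟨K, hK⟩
    obtain ⟨p, hp⟩ := ih (G.erase K) (Finset.erase_ssubset hK)
      (fun K' hK' i => hconv K' (Finset.mem_of_mem_erase hK') i)
      (fun K' hK' => hsymm K' (Finset.mem_of_mem_erase hK'))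
      (fun G' hG' hc => h G' (hG'.trans (Finset.erase_subset K G)) hc)
    obtain ⟨hp1, hp2⟩ := hp
    have hp2' : p.2 ∈ frontier P := (Set.mem_prod.mp hp2).2
    rw [hbd] at hp2'
    obtain ⟨i, hi⟩ := Set.mem_iUnion.mp hp2'
    have hp1' : ∀ K' ∈ G, K' ≠ K → p ∈ K' := by
      intro K' hK' hne
      exact Set.mem_iInter₂.mp hp1 K' (Finset.mem_erase.mpr ⟨hne, hK'⟩)
    rcases hi with hi | hi
    · exact ⟨p, i, fun K' h1 h2 => hp1' K' h1 h2, hi⟩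
    · refine ⟨(p.1 + p.2, -p.2), i, ?_, Set.mem_neg.mp hi⟩
      intro K' hK' hne
      exact hsymm K' hK' p.1 p.2 (by rw [Prod.mk.eta]; exact hp1' K' hK' hne)
  choose q idx hq hidx using hstep
  -- pigeonhole
  obtain ⟨i, -, hi⟩ := Finset.exists_lt_card_fiber_of_mul_lt_card_of_maps_to
    (s := (Finset.univ : Finset {K // K ∈ G})) (t := (Finset.univ : Finset (Fin m)))
    (f := idx) (n := 2*d) (fun a _ => Finset.mem_univ _) (by
      rw [Finset.card_univ, Finset.card_univ, Fintype.card_coe, Fintype.card_fin]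
      have : m * (2 * d) = 2 * m * d := by ring
      omega)
  set S : Finset {K // K ∈ G} := Finset.univ.filter fun K => idx K = i with hS
  have hScard : 2 * d < S.card := hi
  have hSidx : ∀ K ∈ S, idx K = i := fun K hK => (Finset.mem_filter.mp hK).2
  -- a witness point on L i
  obtain ⟨K₀, hK₀⟩ := Finset.card_pos.mp (by omega : 0 < S.card)
  have hqK₀ : (q K₀).2 ∈ L i := hSidx K₀ hK₀ ▸ hidx K₀
  have hvne : ⟪(q K₀).2, v i⟫ = (1:ℝ) := hLv i hqK₀
  -- the linear functional
  set φ : (EuclideanSpace ℝ (Fin d) × EuclideanSpace ℝ (Fin d)) →ₗ[ℝ] ℝ :=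
    ((innerSL ℝ (v i)).toLinearMap).comp (LinearMap.snd ℝ (EuclideanSpace ℝ (Fin d)) (EuclideanSpace ℝ (Fin d))) with hφ
  have hφval : ∀ z : EuclideanSpace ℝ (Fin d) × EuclideanSpace ℝ (Fin d), φ z = ⟪z.2, v i⟫ := by
    intro z
    rw [hφ]
    exact (real_inner_comm (v i) z.2).symm
  have hφne : φ ≠ 0 := by
    intro hc
    have := hφval (q K₀)
    rw [hc] at this
    simp [hvne] at this  -- 0 = 1
  have hker : Module.finrank ℝ (LinearMap.ker φ) + 1 = 2 * d := by
    have := Module.Dual.finrank_ker_add_one_of_ne_zero (f := φ) hφne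
    rw [this]
    have : Module.finrank ℝ (EuclideanSpace ℝ (Fin d) × EuclideanSpace ℝ (Fin d)) = d + d := by
      rw [Module.finrank_prod, finrank_euclideanSpace_fin]
    omega
  -- the family on S is not affinely independent
  have hnotaff : ¬ AffineIndependent ℝ (fun K : {K // K ∈ S} => q K) := by
    intro haff
    have hK₀' : (⟨K₀, hK₀⟩ : {K // K ∈ S}) = ⟨K₀, hK₀⟩ := rfl
    rw [affineIndependent_iff_linearIndependent_vsub ℝ _ ⟨K₀, hK₀⟩] at haff
    have hspan := finrank_span_eq_card haff
    have hle : Submodule.span ℝ (Set.range fun (K : {x : {K // K ∈ S} // x ≠ ⟨K₀, hK₀⟩}) =>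
        q K.1 -ᵥ q K₀) ≤ LinearMap.ker φ := by
      rw [Submodule.span_le]
      rintro x ⟨K, rfl⟩
      have h1 : φ (q K.1) = 1 := by
        rw [hφval]; exact hLv i (hSidx K.1 K.1.2 ▸ hidx K.1)
      have h2 : φ (q K₀) = 1 := by rw [hφval]; exact hvne
      simp only [SetLike.mem_coe, LinearMap.mem_ker, vsub_eq_sub, map_sub, h1, h2, sub_self]
    have hfin := Submodule.finrank_mono hle
    rw [hspan] at hfin
    have hcard' : Fintype.card {x : {K // K ∈ S} // x ≠ ⟨K₀, hK₀⟩} = S.card - 1 := by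
      rw [Fintype.card_subtype_compl]
      simp [Fintype.card_coe]
    omega
  obtain ⟨I, z, hzI, hzIc⟩ := Convex.radon_partition (𝕜 := ℝ) hnotaff
  -- z belongs to every K' ∈ G together with univ ×ˢ L i
  have key : ∀ K' ∈ G, z ∈ K' ∩ (Set.univ ×ˢ L i) := by
    intro K' hK'
    have main : ∀ (J : Set {K // K ∈ S}),
        (∀ K ∈ J, K' ≠ ((K : {K // K ∈ G}) : Set (EuclideanSpace ℝ (Fin d) × EuclideanSpace ℝ (Fin d)))) →
        z ∈ convexHull ℝ ((fun K : {K // K ∈ S} => q K) '' J) →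
        z ∈ K' ∩ (Set.univ ×ˢ L i) := by
      intro J hJ hz
      refine convexHull_min ?_ (hconv K' hK' i).1 hz
      rintro x ⟨K, hKJ, rfl⟩
      exact ⟨hq K.1 K' hK' (hJ K hKJ), Set.mem_univ _, hSidx K.1 K.2 ▸ hidx K.1⟩
    by_cases hK'S : ∃ (hg : K' ∈ G) (hs : (⟨K', hg⟩ : {K // K ∈ G}) ∈ S),
        (⟨⟨K', hg⟩, hs⟩ : {K // K ∈ S}) ∈ I
    · obtain ⟨hg, hs, hmem⟩ := hK'S
      refine main Iᶜ (fun K hKJ hne => hKJ ?_) hzIc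
      have hkey : K = ⟨⟨K', hg⟩, hs⟩ := Subtype.ext (Subtype.ext hne.symm)
      rw [hkey]
      exact hmem
    · refine main I (fun K hKJ hne => hK'S ?_) hzI
      have hg : K' ∈ G := by rw [hne]; exact (K.1).2
      have e1 : (⟨K', hg⟩ : {K // K ∈ G}) = K.1 := Subtype.ext hne
      have hs : (⟨K', hg⟩ : {K // K ∈ G}) ∈ S := by rw [e1]; exact K.2
      refine ⟨hg, hs, ?_⟩
      have e2 : (⟨⟨K', hg⟩, hs⟩ : {K // K ∈ S}) = K := Subtype.ext e1
      rw [e2]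
      exact hKJ
  obtain ⟨K₁, hK₁⟩ : ∃ K, K ∈ G := ⟨K₀.1, K₀.2⟩
  have hz := key K₁ hK₁
  refine ⟨z, Set.mem_iInter₂.mpr (fun K' hK' => (key K' hK').1), Set.mem_univ _, ?_⟩
  rw [hbd]
  exact Set.mem_iUnion.mpr ⟨i, Or.inl hz.2.2⟩
end
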